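/- arXiv:0711.4287 — 2 statements merged into one kernel-verified Lean document; each statement's English description precedes it below -/
import Mathlib

section
/- Let m ∈ ℕ and x ∈ X_m. Then 𝔖(x) = ∅ if and only if m is odd and x_{2i} = x_{2i+1} for all i with 0 ≤ i ≤ (m−1)/2. -/
open Finset

/-- `X_m`: sequences `(x_0,…,x_m)` in `ℕ` with `x i ≤ x (i+1)` and `x i < x (i+2)`. -/
def IsX (m : ℕ) (x : ℕ → ℕ) : Prop :=
  (∀ i, i < m → x i ≤ x (i + 1)) ∧ (∀ i, i + 2 ≤ m → x i < x (i + 2))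

/-- `Y_m`: sequences with `y i ≤ y (i+1)` and `y i + 2 ≤ y (i+2)`. -/
def IsY (m : ℕ) (y : ℕ → ℕ) : Prop :=
  (∀ i, i < m → y i ≤ y (i + 1)) ∧ (∀ i, i + 2 ≤ m → y i + 2 ≤ y (i + 2))

/-- `ℰ_m`: weakly increasing sequences. -/
def IsE (m : ℕ) (e : ℕ → ℕ) : Prop := ∀ i, i < m → e i ≤ e (i + 1)

/-- `𝔖(x)`: indices `i ∈ [0,m]` with `x (i-1) < x i < x (i+1)`,
with conventions `x_{-1} = -∞`, `x_{m+1} = +∞`. -/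
def SS (m : ℕ) (x : ℕ → ℕ) : Finset ℕ :=
  (Finset.range (m + 1)).filter
    (fun i => (i = 0 ∨ x (i - 1) < x i) ∧ (i = m ∨ x i < x (i + 1)))

/-- `𝔉(y)`: intervals `[i,j] ⊆ [0,m]` with
`y_{i-1}-(i-1) < y_i-i = ⋯ = y_j-j < y_{j+1}-(j+1)` (conventions `±∞` at the ends),
encoded as pairs `(i, j)`. -/
def FF (m : ℕ) (y : ℕ → ℕ) : Finset (ℕ × ℕ) :=
  ((Finset.range (m + 1)) ×ˢ (Finset.range (m + 1))).filter
    (fun p => p.1 ≤ p.2 ∧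
      (p.1 = 0 ∨ ((y (p.1 - 1) : ℤ) - ((p.1 : ℤ) - 1) < (y p.1 : ℤ) - (p.1 : ℤ))) ∧
      (p.2 = m ∨ ((y p.2 : ℤ) - (p.2 : ℤ) < (y (p.2 + 1) : ℤ) - ((p.2 : ℤ) + 1))) ∧
      (∀ k ∈ Finset.Ico p.1 p.2, ((y k : ℤ) - (k : ℤ) = (y (k + 1) : ℤ) - ((k : ℤ) + 1))))

/-- `𝔉'(y)`: the intervals in `𝔉(y)` of odd cardinality. -/
def FF' (m : ℕ) (y : ℕ → ℕ) : Finset (ℕ × ℕ) :=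
  (FF m y).filter (fun p => Odd (p.2 - p.1 + 1))

/-- `R(y)`: endpoints of intervals in `𝔉(y)`. -/
def RR (m : ℕ) (y : ℕ → ℕ) : Finset ℕ :=
  (Finset.range (m + 1)).filter (fun k => ∃ p ∈ FF m y, k = p.1 ∨ k = p.2)

/-- `R_0(y)`: those `k` with `[k,k] ∈ 𝔉(y)`. -/
def RR0 (m : ℕ) (y : ℕ → ℕ) : Finset ℕ :=
  (Finset.range (m + 1)).filter (fun k => (k, k) ∈ FF m y)

/-- `S(y)`: pairs `(x, x') ∈ X_m × X_m` with `x + x' = y`,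
`𝔖(x) ∪ 𝔖(x') = R(y)`, `𝔖(x) ∩ 𝔖(x') = R_0(y)`, and `𝔖(x') = ∅` if `𝔉'(y) = ∅`. -/
def IsS (m : ℕ) (y x x' : ℕ → ℕ) : Prop :=
  IsX m x ∧ IsX m x' ∧ (∀ i, i ≤ m → x i + x' i = y i) ∧
  SS m x ∪ SS m x' = RR m y ∧ SS m x ∩ SS m x' = RR0 m y ∧
  (FF' m y = ∅ → SS m x' = ∅)

/-! The constraints `x i < x (i + 2)` force, when no index is a strict local ascent, the pattern
`x 0 = x 1 < x 2 = x 3 < ⋯`: the left condition at `2 i` holds (by `x (2 i - 1) = x (2 i - 2) < x (2 i)`),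
so the right one must fail, i.e. `2 i < m` and `x (2 i) = x (2 i + 1)`. In particular `m` cannot be even.
Conversely such a pairing kills the right condition at even and the left condition at odd indices. -/

theorem mem_SS_iff {m : ℕ} {x : ℕ → ℕ} {i : ℕ} :
    i ∈ SS m x ↔ i ≤ m ∧ (i = 0 ∨ x (i - 1) < x i) ∧ (i = m ∨ x i < x (i + 1)) := by
  simp [SS]

theorem IsX.lt_and_eq_succ_of_notMem_SS {m : ℕ} {x : ℕ → ℕ} (hx : IsX m x) {i : ℕ}
    (hi : i ≤ m) (hleft : i = 0 ∨ x (i - 1) < x i) (hS : i ∉ SS m x) :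
    i < m ∧ x i = x (i + 1) := by
  simp only [mem_SS_iff, hi, hleft, true_and, not_or, not_lt] at hS
  have hlt : i < m := lt_of_le_of_ne hi hS.1
  exact ⟨hlt, le_antisymm (hx.1 i hlt) hS.2⟩

theorem IsX.pairs_eq_of_SS_eq_empty {m : ℕ} {x : ℕ → ℕ} (hx : IsX m x) (h : SS m x = ∅) :
    ∀ i, 2 * i ≤ m → 2 * i < m ∧ x (2 * i) = x (2 * i + 1) := by
  intro i
  induction i with
  | zero => exact fun hm => hx.lt_and_eq_succ_of_notMem_SS hm (Or.inl rfl) (by simp [h])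
  | succ n ih =>
    intro hm
    obtain ⟨-, hpair⟩ := ih (by omega)
    have hstep := hx.2 (2 * n) (by omega)
    refine hx.lt_and_eq_succ_of_notMem_SS hm (Or.inr ?_) (by simp [h])
    rw [show 2 * (n + 1) - 1 = 2 * n + 1 by omega, ← hpair]
    exact hstep

theorem SS_eq_empty_of_pairs_eq {m : ℕ} {x : ℕ → ℕ} (hm : Odd m)
    (hpair : ∀ i ≤ (m - 1) / 2, x (2 * i) = x (2 * i + 1)) : SS m x = ∅ := by
  obtain ⟨l, rfl⟩ := hm
  refine eq_empty_of_forall_notMem fun i hi => ?_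
  obtain ⟨him, hleft, hright⟩ := mem_SS_iff.1 hi
  obtain ⟨k, rfl | rfl⟩ := Nat.even_or_odd' i
  · have := hpair k (by omega)
    omega
  · have := hpair k (by omega)
    rw [Nat.add_sub_cancel] at hleft
    omega

theorem stmt1 (m : ℕ) (x : ℕ → ℕ) (hx : IsX m x) :
    SS m x = ∅ ↔ Odd m ∧ ∀ i ≤ (m - 1) / 2, x (2 * i) = x (2 * i + 1) := by
  refine ⟨fun h => ?_, fun ⟨hm, hpair⟩ => SS_eq_empty_of_pairs_eq hm hpair⟩
  have hpairs := hx.pairs_eq_of_SS_eq_empty h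
  have hm : Odd m := by
    obtain ⟨k, rfl⟩ | hm := Nat.even_or_odd m
    · exact absurd (hpairs k (by omega)).1 (by omega)
    · exact hm
  obtain ⟨l, rfl⟩ := hm
  exact ⟨⟨l, rfl⟩, fun i hi => (hpairs i (by omega)).2⟩
end

section
/- Let m ∈ ℕ, let x, x' ∈ X_m, and set y = x + x' ∈ Y_m. Then |𝔖(x)| + |𝔖(x')| ≤ 2·|𝔉(y)|, with equality if and only if 𝔖(x) ∪ 𝔖(x') = R(y) and 𝔖(x) ∩ 𝔖(x') = R_0(y). -/
open Finset

/-!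
Write `y = x + x'` and `d i = y i - i`; the intervals of `𝔉(y)` are the maximal runs on which
`d` is constant and across whose ends `d` strictly increases. Since `y ∈ Y_m`, a run of steps
`y (k+1) = y k + 1` entered by a strict increase of `y` can be followed until `d` jumps, so
every point at which `y` strictly increases on both sides and jumps by at least `2` on one side
is an endpoint of an interval in `𝔉(y)`. A strict point of `x` is such a point: if `y` does not
jump on its left, then `x'` is flat there and the condition `x' (i-1) < x' (i+1)` makes `y`
jump on its right. A common strict point of `x` and `x'` makes `y` jump on both sides, so it
is a singleton interval. Hence `𝔖(x) ∪ 𝔖(x') ⊆ R(y)` and `𝔖(x) ∩ 𝔖(x') ⊆ R_0(y)`, and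
`|𝔖(x)| + |𝔖(x')| = |𝔖(x) ∪ 𝔖(x')| + |𝔖(x) ∩ 𝔖(x')| ≤ |R(y)| + |R_0(y)| = 2 |𝔉(y)|`.
-/

lemma Finset.card_add_card_le_of_union_subset_of_inter_subset {α : Type*} [DecidableEq α]
    {s t u v : Finset α} (hu : s ∪ t ⊆ u) (hv : s ∩ t ⊆ v) :
    #s + #t ≤ #u + #v ∧ (#s + #t = #u + #v ↔ s ∪ t = u ∧ s ∩ t = v) := by
  rw [← card_union_add_card_inter]
  have hcu := card_le_card hu
  have hcv := card_le_card hv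
  refine ⟨by omega, fun h => ⟨eq_of_subset_of_card_le hu (by omega),
    eq_of_subset_of_card_le hv (by omega)⟩, ?_⟩
  rintro ⟨rfl, rfl⟩
  rfl

section Runs

variable {m : ℕ} {y : ℕ → ℕ}

lemma mem_FF_iff {p : ℕ × ℕ} :
    p ∈ FF m y ↔ p.2 ≤ m ∧ p.1 ≤ p.2 ∧ (p.1 = 0 ∨ y (p.1 - 1) + 1 < y p.1) ∧
      (p.2 = m ∨ y p.2 + 1 < y (p.2 + 1)) ∧ ∀ k ∈ Ico p.1 p.2, y (k + 1) = y k + 1 := by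
  simp only [FF, mem_filter, mem_product, mem_range]
  have hleft : (p.1 = 0 ∨ (y (p.1 - 1) : ℤ) - ((p.1 : ℤ) - 1) < (y p.1 : ℤ) - p.1) ↔
      (p.1 = 0 ∨ y (p.1 - 1) + 1 < y p.1) := by
    omega
  have hright : (p.2 = m ∨ (y p.2 : ℤ) - p.2 < (y (p.2 + 1) : ℤ) - ((p.2 : ℤ) + 1)) ↔
      (p.2 = m ∨ y p.2 + 1 < y (p.2 + 1)) := by
    omega
  have hrun : (∀ k ∈ Ico p.1 p.2, (y k : ℤ) - k = (y (k + 1) : ℤ) - ((k : ℤ) + 1)) ↔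
      ∀ k ∈ Ico p.1 p.2, y (k + 1) = y k + 1 :=
    forall₂_congr fun k _ => by omega
  rw [hleft, hright, hrun]
  constructor
  · rintro ⟨⟨-, hj⟩, h⟩
    exact ⟨by omega, h⟩
  · rintro ⟨hm, h⟩
    exact ⟨⟨by omega, by omega⟩, h⟩

/-- A boundary jump of either interval would otherwise lie inside the other, where `y` only steps
by `1`. -/
lemma eq_of_mem_FF {p q : ℕ × ℕ} {k : ℕ} (hp : p ∈ FF m y) (hq : q ∈ FF m y)
    (hkp : k ∈ Icc p.1 p.2) (hkq : k ∈ Icc q.1 q.2) : p = q := by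
  wlog hle : p.1 ≤ q.1 generalizing p q
  · exact (this hq hp hkq hkp (by omega)).symm
  rw [mem_Icc] at hkp hkq
  obtain ⟨hpm, -, -, hpR, hpC⟩ := mem_FF_iff.1 hp
  obtain ⟨hqm, -, hqL, hqR, hqC⟩ := mem_FF_iff.1 hq
  have hfst : p.1 = q.1 := by
    by_contra hne
    have h := hpC (q.1 - 1) (mem_Ico.2 ⟨by omega, by omega⟩)
    rw [Nat.sub_add_cancel (by omega)] at h
    omega
  have hsnd : p.2 = q.2 := by
    rcases lt_trichotomy p.2 q.2 with h | h | h
    · have := hqC p.2 (mem_Ico.2 ⟨by omega, h⟩)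
      omega
    · exact h
    · have := hpC q.2 (mem_Ico.2 ⟨by omega, h⟩)
      omega
  exact Prod.ext hfst hsnd

lemma card_RR_add_card_RR0 : #(RR m y) + #(RR0 m y) = 2 * #(FF m y) := by
  have hRR : RR m y = (FF m y).image Prod.fst ∪ (FF m y).image Prod.snd := by
    ext k
    simp only [RR, mem_filter, mem_range, mem_union, mem_image]
    constructor
    · rintro ⟨-, p, hp, rfl | rfl⟩
      exacts [.inl ⟨p, hp, rfl⟩, .inr ⟨p, hp, rfl⟩]
    · rintro (⟨p, hp, rfl⟩ | ⟨p, hp, rfl⟩) <;> have := mem_FF_iff.1 hp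
      exacts [⟨by omega, p, hp, .inl rfl⟩, ⟨by omega, p, hp, .inr rfl⟩]
  have hRR0 : RR0 m y = (FF m y).image Prod.fst ∩ (FF m y).image Prod.snd := by
    ext k
    simp only [RR0, mem_filter, mem_range, mem_inter, mem_image]
    constructor
    · rintro ⟨-, hk⟩
      exact ⟨⟨_, hk, rfl⟩, ⟨_, hk, rfl⟩⟩
    · rintro ⟨⟨p, hp, rfl⟩, ⟨q, hq, hqp⟩⟩
      have hp' := mem_FF_iff.1 hp
      have hq' := mem_FF_iff.1 hq
      obtain rfl := eq_of_mem_FF (k := p.1) hp hq (by simp; omega) (by simp; omega)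
      exact ⟨by omega, by rwa [show (p.1, p.1) = p from Prod.ext rfl hqp.symm]⟩
  have hinj_fst : Set.InjOn Prod.fst (FF m y : Set (ℕ × ℕ)) := fun p hp q hq h => by
    have hp' := mem_FF_iff.1 hp
    have hq' := mem_FF_iff.1 hq
    exact eq_of_mem_FF (k := p.1) hp hq (by simp; omega) (by simp; omega)
  have hinj_snd : Set.InjOn Prod.snd (FF m y : Set (ℕ × ℕ)) := fun p hp q hq h => by
    have hp' := mem_FF_iff.1 hp
    have hq' := mem_FF_iff.1 hq
    exact eq_of_mem_FF (k := p.2) hp hq (by simp; omega) (by simp; omega)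
  rw [hRR, hRR0, card_union_add_card_inter, card_image_of_injOn hinj_fst,
    card_image_of_injOn hinj_snd, two_mul]

lemma IsY.exists_run_right (hy : IsY m y) {i : ℕ} (hi : i ≤ m) (h : i = m ∨ y i < y (i + 1)) :
    ∃ j, i ≤ j ∧ j ≤ m ∧ (∀ k ∈ Ico i j, y (k + 1) = y k + 1) ∧
      (j = m ∨ y j + 1 < y (j + 1)) := by
  induction hn : m - i generalizing i with
  | zero => exact ⟨i, le_rfl, hi, by simp, .inl (by omega)⟩
  | succ n ih =>
    by_cases hjump : y i + 1 < y (i + 1)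
    · exact ⟨i, le_rfl, hi, by simp, .inr hjump⟩
    have hstep : y (i + 1) = y i + 1 := by omega
    have hnext : i + 1 = m ∨ y (i + 1) < y (i + 2) := by
      by_cases him : i + 1 = m
      · exact .inl him
      · have := hy.2 i (by omega)
        exact .inr (by omega)
    obtain ⟨j, hij, hjm, hrun, hend⟩ := ih (by omega) hnext (by omega)
    refine ⟨j, by omega, hjm, fun k hk => ?_, hend⟩
    rcases eq_or_ne k i with rfl | hki
    · exact hstep
    · exact hrun k (by simp only [mem_Ico] at hk ⊢; omega)

lemma IsY.exists_run_left (hy : IsY m y) {i : ℕ} (hi : i ≤ m) (h : i = 0 ∨ y (i - 1) < y i) :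
    ∃ a, a ≤ i ∧ (∀ k ∈ Ico a i, y (k + 1) = y k + 1) ∧ (a = 0 ∨ y (a - 1) + 1 < y a) := by
  induction i with
  | zero => exact ⟨0, le_rfl, by simp, .inl rfl⟩
  | succ i ih =>
    by_cases hjump : y i + 1 < y (i + 1)
    · exact ⟨i + 1, le_rfl, by simp, .inr hjump⟩
    have hlt : y i < y (i + 1) := by simpa using h
    have hstep : y (i + 1) = y i + 1 := by omega
    have hprev : i = 0 ∨ y (i - 1) < y i := by
      by_cases h0 : i = 0
      · exact .inl h0
      · have := hy.2 (i - 1) (by omega)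
        rw [show i - 1 + 2 = i + 1 by omega] at this
        exact .inr (by omega)
    obtain ⟨a, hai, hrun, hend⟩ := ih (by omega) hprev
    refine ⟨a, by omega, fun k hk => ?_, hend⟩
    rcases eq_or_ne k i with rfl | hki
    · exact hstep
    · exact hrun k (by simp only [mem_Ico] at hk ⊢; omega)

lemma IsY.mem_RR (hy : IsY m y) {i : ℕ} (hi : i ≤ m)
    (hl : i = 0 ∨ y (i - 1) < y i) (hr : i = m ∨ y i < y (i + 1))
    (hjump : (i = 0 ∨ y (i - 1) + 1 < y i) ∨ (i = m ∨ y i + 1 < y (i + 1))) :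
    i ∈ RR m y := by
  refine mem_filter.2 ⟨mem_range.2 (by omega), ?_⟩
  rcases hjump with hjump | hjump
  · obtain ⟨j, hij, hjm, hrun, hend⟩ := hy.exists_run_right hi hr
    exact ⟨(i, j), mem_FF_iff.2 ⟨hjm, hij, hjump, hend, hrun⟩, .inl rfl⟩
  · obtain ⟨a, hai, hrun, hend⟩ := hy.exists_run_left hi hl
    exact ⟨(a, i), mem_FF_iff.2 ⟨hi, hai, hend, hjump, hrun⟩, .inr rfl⟩

end Runs

section Strict

variable {m : ℕ} {x x' : ℕ → ℕ}

lemma IsX.add (hx : IsX m x) (hx' : IsX m x') : IsY m (x + x') :=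
  ⟨fun i hi => add_le_add (hx.1 i hi) (hx'.1 i hi),
    fun i hi => by have := hx.2 i hi; have := hx'.2 i hi; simp only [Pi.add_apply]; omega⟩

lemma SS_subset_RR (hx : IsX m x) (hx' : IsX m x') : SS m x ⊆ RR m (x + x') := by
  intro i hi
  simp only [SS, mem_filter, mem_range] at hi
  obtain ⟨him, hxl, hxr⟩ := hi
  have hmono : ∀ k, k < m → x' k ≤ x' (k + 1) := hx'.1
  apply (hx.add hx').mem_RR (by omega) <;> simp only [Pi.add_apply]
  · rcases eq_or_ne i 0 with h0 | h0
    · exact .inl h0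
    · have := hmono (i - 1) (by omega)
      rw [Nat.sub_add_cancel (by omega)] at this
      exact .inr (by have := hxl.resolve_left h0; omega)
  · rcases eq_or_ne i m with hm | hm
    · exact .inl hm
    · exact .inr (by have := hmono i (by omega); have := hxr.resolve_left hm; omega)
  · by_cases hjump : i = 0 ∨ x (i - 1) + x' (i - 1) + 1 < x i + x' i
    · exact .inl hjump
    rcases eq_or_ne i m with hm | hm
    · exact .inr (.inl hm)
    -- `y` steps by exactly `1` into `i`, so `x'` is flat there and must rise right after `i`
    have hflat := hmono (i - 1) (by omega)
    have hrise := hx'.2 (i - 1) (by omega)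
    rw [Nat.sub_add_cancel (by omega)] at hflat
    rw [show i - 1 + 2 = i + 1 by omega] at hrise
    have := hxl.resolve_left (by omega)
    have := hxr.resolve_left hm
    exact .inr (.inr (by omega))

lemma SS_inter_SS_subset_RR0 : SS m x ∩ SS m x' ⊆ RR0 m (x + x') := by
  intro i hi
  simp only [mem_inter, SS, mem_filter, mem_range] at hi
  obtain ⟨⟨him, hxl, hxr⟩, -, hxl', hxr'⟩ := hi
  refine mem_filter.2 ⟨mem_range.2 him, mem_FF_iff.2 ⟨by omega, le_rfl, ?_, ?_, by simp⟩⟩ <;>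
  · simp only [Pi.add_apply]
    omega

end Strict

theorem stmt8 (m : ℕ) (x x' : ℕ → ℕ) (hx : IsX m x) (hx' : IsX m x') :
    (SS m x).card + (SS m x').card ≤ 2 * (FF m (fun i => x i + x' i)).card ∧
    ((SS m x).card + (SS m x').card = 2 * (FF m (fun i => x i + x' i)).card ↔
      SS m x ∪ SS m x' = RR m (fun i => x i + x' i) ∧
      SS m x ∩ SS m x' = RR0 m (fun i => x i + x' i)) := by
  have hunion : SS m x ∪ SS m x' ⊆ RR m (x + x') :=
    union_subset (SS_subset_RR hx hx') (add_comm x' x ▸ SS_subset_RR hx' hx)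
  rw [← card_RR_add_card_RR0]
  exact card_add_card_le_of_union_subset_of_inter_subset hunion SS_inter_SS_subset_RR0
end
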